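/- Let p ≥ 1 be an integer, M a Hermitian s×s complex matrix with ‖M‖_∞ ≤ 1, and q ∈ ℝ[x] a polynomial with f_p(x) ≤ q(x) for all x ∈ [−1,1]. Then d_p(M) ≤ tr(q(M))^{1/p}. -/

import Mathlib

/-!
The positive part `N = cfc (max · 0) M` is psd, and `M - N = cfc (min · 0) M` has eigenvalues
`min λᵢ 0`, so `‖M - N‖_p ^ p = tr (f_p(M))`. As every `λᵢ` lies in `[-1, 1]`, this is at most
`tr (q(M))`.
-/

open scoped ComplexOrder

noncomputable section

/-- The negative part function `f_p` for a natural exponent `p`: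
`f_p(x) = |x|^p` for `x < 0` and `0` otherwise. -/
def negPart (p : ℕ) (x : ℝ) : ℝ := if x < 0 then |x| ^ p else 0

/-- The normalized trace of `f(M)` for a Hermitian matrix `M`, defined spectrally:
`tr(f(M)) = s⁻¹ ∑ᵢ f(λᵢ)`. -/
def trFun {s : ℕ} {M : Matrix (Fin s) (Fin s) ℂ} (hM : M.IsHermitian)
    (f : ℝ → ℝ) : ℝ := (s : ℝ)⁻¹ * ∑ i, f (hM.eigenvalues i)

/-- The normalized Schatten p-norm of a Hermitian matrix:
`‖M‖_p = (s⁻¹ ∑ᵢ |λᵢ|^p)^(1/p)`. -/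
def schattenNorm {s : ℕ} (p : ℝ) {M : Matrix (Fin s) (Fin s) ℂ}
    (hM : M.IsHermitian) : ℝ :=
  ((s : ℝ)⁻¹ * ∑ i, |hM.eigenvalues i| ^ p) ^ (1 / p)

/-- The distance of a Hermitian matrix to the psd cone in normalized Schatten p-norm. -/
def distPSD {s : ℕ} (p : ℝ) {M : Matrix (Fin s) (Fin s) ℂ}
    (hM : M.IsHermitian) : ℝ :=
  sInf { r : ℝ | ∃ (N : Matrix (Fin s) (Fin s) ℂ) (hN : N.PosSemidef),
    r = schattenNorm p (hM.sub hN.isHermitian) }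

namespace Matrix.IsHermitian

variable {𝕜 n : Type*} [RCLike 𝕜] [Fintype n] [DecidableEq n] {A B : Matrix n n 𝕜}

theorem sum_eigenvalues_eq_of_eq_cfc (hA : A.IsHermitian) (hB : B.IsHermitian) {f : ℝ → ℝ}
    (hBA : B = cfc f A) (g : ℝ → ℝ) :
    ∑ i, g (hB.eigenvalues i) = ∑ i, g (f (hA.eigenvalues i)) := by
  have hroots : Multiset.map ((RCLike.ofReal : ℝ → 𝕜) ∘ hB.eigenvalues) Finset.univ.val =
      Multiset.map ((RCLike.ofReal : ℝ → 𝕜) ∘ f ∘ hA.eigenvalues) Finset.univ.val := by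
    rw [← hB.roots_charpoly_eq_eigenvalues, hBA, hA.charpoly_cfc_eq, Polynomial.roots_prod]
    · simp
    · simp [Finset.prod_ne_zero_iff, Polynomial.X_sub_C_ne_zero]
  simpa [Multiset.map_map, Function.comp_def] using
    congrArg (fun m => (m.map (g ∘ RCLike.re)).sum) hroots

theorem sub_cfc_max_zero (hA : A.IsHermitian) :
    A - cfc (fun x : ℝ => max x 0) A = cfc (fun x : ℝ => min x 0) A := by
  calc A - cfc (fun x : ℝ => max x 0) A = cfc id A - cfc (fun x : ℝ => max x 0) A := by
        rw [cfc_id ℝ A hA.isSelfAdjoint]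
    _ = cfc (fun x : ℝ => x - max x 0) A := (cfc_sub _ _ A).symm
    _ = cfc (fun x : ℝ => min x 0) A :=
        cfc_congr fun x _ => by rcases le_total x 0 with h | h <;> simp [h]

end Matrix.IsHermitian

open scoped MatrixOrder in
theorem Matrix.posSemidef_cfc_max_zero {𝕜 n : Type*} [RCLike 𝕜] [Fintype n] [DecidableEq n]
    (A : Matrix n n 𝕜) : (cfc (fun x : ℝ => max x 0) A).PosSemidef :=
  Matrix.nonneg_iff_posSemidef.mp (cfc_nonneg fun x _ => le_max_right x 0)

theorem abs_min_zero_rpow_eq_negPart {p : ℕ} (hp : p ≠ 0) (x : ℝ) :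
    |min x 0| ^ (p : ℝ) = negPart p x := by
  rw [Real.rpow_natCast, _root_.negPart]
  rcases lt_or_ge x 0 with h | h
  · rw [if_pos h, min_eq_left h.le]
  · rw [if_neg h.not_gt, min_eq_right h, abs_zero, zero_pow hp]

section

variable {s : ℕ} {M N : Matrix (Fin s) (Fin s) ℂ}

theorem trFun_nonneg (hM : M.IsHermitian) {f : ℝ → ℝ} (hf : ∀ i, 0 ≤ f (hM.eigenvalues i)) :
    0 ≤ trFun hM f :=
  mul_nonneg (by positivity) (Finset.sum_nonneg fun i _ => hf i)

theorem trFun_mono (hM : M.IsHermitian) {f g : ℝ → ℝ}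
    (hfg : ∀ i, f (hM.eigenvalues i) ≤ g (hM.eigenvalues i)) : trFun hM f ≤ trFun hM g :=
  mul_le_mul_of_nonneg_left (Finset.sum_le_sum fun i _ => hfg i) (by positivity)

theorem schattenNorm_nonneg (p : ℝ) (hM : M.IsHermitian) : 0 ≤ schattenNorm p hM :=
  Real.rpow_nonneg (trFun_nonneg hM (f := fun x => |x| ^ p) fun _ => by positivity) _

theorem schattenNorm_eq_of_eq_cfc (p : ℝ) (hM : M.IsHermitian) (hN : N.IsHermitian)
    {f : ℝ → ℝ} (hNM : N = cfc f M) :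
    schattenNorm p hN = trFun hM (fun x => |f x| ^ p) ^ (1 / p) := by
  rw [schattenNorm, trFun, hM.sum_eigenvalues_eq_of_eq_cfc hN hNM (fun x => |x| ^ p)]

theorem distPSD_le_schattenNorm (p : ℝ) (hM : M.IsHermitian) (hN : N.PosSemidef) :
    distPSD p hM ≤ schattenNorm p (hM.sub hN.isHermitian) :=
  csInf_le ⟨0, by rintro _ ⟨N, hN, rfl⟩; exact schattenNorm_nonneg p _⟩ ⟨N, hN, rfl⟩

end

/-- if `f_p ≤ q` on `[-1,1]`, then `d_p(M) ≤ tr(q(M))^(1/p)`. -/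
theorem statement3 (s : ℕ) (p : ℕ) (hp : 1 ≤ p) (M : Matrix (Fin s) (Fin s) ℂ)
    (hM : M.IsHermitian) (hnorm : ∀ i, |hM.eigenvalues i| ≤ 1) (q : Polynomial ℝ)
    (hq : ∀ x ∈ Set.Icc (-1 : ℝ) 1, negPart p x ≤ q.eval x) :
    distPSD (p : ℝ) hM ≤ trFun hM (fun x => q.eval x) ^ (1 / (p : ℝ)) := by
  have hN := M.posSemidef_cfc_max_zero
  calc distPSD p hM ≤ schattenNorm p (hM.sub hN.isHermitian) := distPSD_le_schattenNorm p hM hN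
    _ = trFun hM (fun x => |min x 0| ^ (p : ℝ)) ^ (1 / (p : ℝ)) :=
        schattenNorm_eq_of_eq_cfc p hM _ hM.sub_cfc_max_zero
    _ ≤ trFun hM (fun x => q.eval x) ^ (1 / (p : ℝ)) := by
        refine Real.rpow_le_rpow (trFun_nonneg hM fun _ => by positivity) ?_ (by positivity)
        refine trFun_mono hM fun i => ?_
        rw [abs_min_zero_rpow_eq_negPart (by omega)]
        exact hq _ (abs_le.mp (hnorm i))

end
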